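/- arXiv:2005.12915 — 4 statements merged into one kernel-verified Lean document; each statement's English description precedes it below -/
import Mathlib

section
/- Let G be a graph and L a k-assignment for G such that every color c in the palette satisfies η_L(c) < 2k. If there exists a proper L-coloring of G in which every color c is used at most ⌈η_L(c)/k⌉ times, then G has a proportional L-coloring. -/
open Finset SimpleGraph

/-- `L` is a `k`-assignment: every vertex gets a list (finset) of exactly `k` colors. -/
def IsKAssignment {V : Type*} (L : V → Finset ℕ) (k : ℕ) : Prop :=
  ∀ v, (L v).card = k

/-- The multiplicity `η_L(c)`: the number of vertices whose list contains `c`. -/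
def mult {V : Type*} [Fintype V] (L : V → Finset ℕ) (c : ℕ) : ℕ :=
  (Finset.univ.filter (fun v => c ∈ L v)).card

/-- The palette of a list assignment: the union of all the lists. -/
def palette {V : Type*} [Fintype V] (L : V → Finset ℕ) : Finset ℕ :=
  Finset.univ.biUnion L

/-- A proper `L`-coloring: each vertex is colored from its list, and adjacent
vertices get different colors. -/
def IsProperListColoring {V : Type*} (G : SimpleGraph V) (L : V → Finset ℕ)
    (f : V → ℕ) : Prop :=
  (∀ v, f v ∈ L v) ∧ ∀ ⦃u w⦄, G.Adj u w → f u ≠ f w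

/-- A proportional `L`-coloring: a proper `L`-coloring such that each color `c` in
the palette is used `⌊η(c)/k⌋` or `⌈η(c)/k⌉` times. -/
def IsProportionalColoring {V : Type*} [Fintype V] (G : SimpleGraph V)
    (L : V → Finset ℕ) (k : ℕ) (f : V → ℕ) : Prop :=
  IsProperListColoring G L f ∧
    ∀ c ∈ palette L,
      (Finset.univ.filter (fun v => f v = c)).card = mult L c / k ∨
      (Finset.univ.filter (fun v => f v = c)).card = (mult L c + k - 1) / k

/-- `G` is proportionally `k`-choosable. -/
def ProportionallyChoosable {V : Type*} [Fintype V] (G : SimpleGraph V) (k : ℕ) : Prop :=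
  ∀ L : V → Finset ℕ, IsKAssignment L k → ∃ f, IsProportionalColoring G L k f

/-- The proportional choice number `χ_pc(G)`. -/
noncomputable def propChoiceNumber {V : Type*} [Fintype V] (G : SimpleGraph V) : ℕ :=
  sInf {k | ProportionallyChoosable G k}

/-- An equitable `k`-coloring exists: a proper coloring with `k` (possibly empty)
color classes whose sizes pairwise differ by at most one. -/
def EquitablyColorable {V : Type*} [Fintype V] (G : SimpleGraph V) (k : ℕ) : Prop :=
  ∃ f : V → Fin k, (∀ ⦃u w⦄, G.Adj u w → f u ≠ f w) ∧
    ∀ c c' : Fin k,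
      (Finset.univ.filter (fun v => f v = c)).card ≤
        (Finset.univ.filter (fun v => f v = c')).card + 1

/-- The complete bipartite graph `K_{n,m}`. -/
abbrev KBip (n m : ℕ) : SimpleGraph (Fin n ⊕ Fin m) :=
  completeBipartiteGraph (Fin n) (Fin m)

/-! Since `η(c) < 2k`, a coloring that uses no color excessively is proportional as soon as
every color with `η(c) ≥ k` is used. An unused such color `c₀` is brought into use along an
augmenting chain, where `c → c'` when some vertex colored `c'` has `c` in its list. Let `R` be the
set of colors reachable from `c₀`; every list meeting `R` belongs to a vertex colored in `R`. If
every color of `R` had `η ≥ k` and were used at most once, then, as `c₀` is unused,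
`k · #R ≤ ∑_{c ∈ R} η(c) ≤ k · #{v | f v ∈ R} ≤ k · (#R - 1)`. So some reachable color can
spare a vertex, and shifting one vertex back along a loop-free chain to it puts `c₀` into use, keeps
every other used color in use and creates no excess. -/

section Recoloring

variable {V : Type*} {G : SimpleGraph V} {L : V → Finset ℕ} {k : ℕ} {f : V → ℕ} {v : V}
  {a : ℕ}

lemma IsProperListColoring.update [DecidableEq V] (hf : IsProperListColoring G L f)
    (hv : a ∈ L v) (ha : ∀ w, f w ≠ a) :
    IsProperListColoring G L (Function.update f v a) := by
  refine ⟨fun w => ?_, fun u w huw => ?_⟩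
  · rcases eq_or_ne w v with rfl | hw
    · simpa using hv
    · simpa [hw] using hf.1 w
  · simp only [Function.update_apply]
    split_ifs with hu hw hw
    · exact absurd (hu.trans hw.symm) (G.ne_of_adj huw)
    · exact (ha w).symm
    · exact ha u
    · exact hf.2 huw

variable [Fintype V]

def classCard (f : V → ℕ) (c : ℕ) : ℕ := #{v | f v = c}

def IsNonExcessive (G : SimpleGraph V) (L : V → Finset ℕ) (k : ℕ) (f : V → ℕ) : Prop :=
  IsProperListColoring G L f ∧ ∀ c, classCard f c ≤ (mult L c + k - 1) / k

def deficientColors (L : V → Finset ℕ) (k : ℕ) (f : V → ℕ) : Finset ℕ :=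
  {c ∈ palette L | k ≤ mult L c ∧ classCard f c = 0}

-- `c` can give up a vertex without becoming deficient
def IsSlack (L : V → Finset ℕ) (k : ℕ) (f : V → ℕ) (c : ℕ) : Prop :=
  2 ≤ classCard f c ∨ mult L c < k

def Recolorable (L : V → Finset ℕ) (f : V → ℕ) (c c' : ℕ) : Prop :=
  ∃ v, f v = c' ∧ c ∈ L v

lemma classCard_eq_zero_iff {c : ℕ} : classCard f c = 0 ↔ ∀ v, f v ≠ c := by
  simp [classCard, filter_eq_empty_iff]

lemma classCard_apply_pos : 0 < classCard f (f v) :=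
  card_pos.2 ⟨v, by simp⟩

lemma mult_pos_of_mem {c : ℕ} (hc : c ∈ L v) : 0 < mult L c :=
  card_pos.2 ⟨v, mem_filter.2 ⟨mem_univ v, hc⟩⟩

lemma mult_pos_of_mem_palette {c : ℕ} (hc : c ∈ palette L) : 0 < mult L c := by
  obtain ⟨v, -, hcv⟩ := mem_biUnion.1 hc
  exact mult_pos_of_mem hcv

lemma sum_mult_le_mul_sum_classCard (hL : ∀ v, #(L v) ≤ k) {R : Finset ℕ}
    (hR : ∀ v, ∀ c ∈ L v, c ∈ R → f v ∈ R) :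
    ∑ c ∈ R, mult L c ≤ k * ∑ c ∈ R, classCard f c := by
  calc ∑ c ∈ R, mult L c = ∑ v, #{c ∈ R | c ∈ L v} :=
        sum_card_bipartiteAbove_eq_sum_card_bipartiteBelow (r := fun c v => c ∈ L v)
    _ ≤ ∑ v, if f v ∈ R then k else 0 := sum_le_sum fun v _ => by
        split_ifs with h
        · exact (card_le_card fun c hc => (mem_filter.1 hc).2).trans (hL v)
        · rw [nonpos_iff_eq_zero, card_eq_zero, filter_eq_empty_iff]
          exact fun c hcR hcL => h (hR v c hcL hcR)
    _ = ∑ c ∈ R, ∑ v, if f v = c then k else 0 := by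
        rw [sum_comm]
        exact sum_congr rfl fun v _ => (sum_ite_eq R (f v) fun _ => k).symm
    _ = k * ∑ c ∈ R, classCard f c := by
        simp only [mul_sum, classCard, card_filter, mul_ite, mul_one, mul_zero]

lemma exists_reflTransGen_isSlack (hk : 0 < k) (hL : ∀ v, #(L v) ≤ k) {c₀ : ℕ}
    (h0 : classCard f c₀ = 0) :
    ∃ c, Relation.ReflTransGen (Recolorable L f) c₀ c ∧ IsSlack L k f c := by
  classical
  by_contra! H
  set R := {c ∈ insert c₀ (univ.image f) | Relation.ReflTransGen (Recolorable L f) c₀ c}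
  have hc₀ : c₀ ∈ R := mem_filter.2 ⟨mem_insert_self _ _, .refl⟩
  have hR : ∀ c ∈ R, k ≤ mult L c ∧ classCard f c ≤ 1 := fun c hc => by
    have := H c (mem_filter.1 hc).2
    simp only [IsSlack, not_or] at this
    omega
  have hclosed : ∀ v, ∀ c ∈ L v, c ∈ R → f v ∈ R := fun v c hcv hc =>
    mem_filter.2 ⟨mem_insert_of_mem (mem_image_of_mem f (mem_univ v)),
      (mem_filter.1 hc).2.tail ⟨v, rfl, hcv⟩⟩
  have hmult : #R * k ≤ ∑ c ∈ R, mult L c :=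
    card_nsmul_le_sum R _ k fun c hc => (hR c hc).1
  have hcard : ∑ c ∈ R, classCard f c < #R := by
    rw [← add_sum_erase R _ hc₀, h0, zero_add, ← card_erase_add_one hc₀, Nat.lt_succ_iff]
    simpa using sum_le_card_nsmul (R.erase c₀) _ 1 fun c hc => (hR c (mem_of_mem_erase hc)).2
  have := Nat.le_of_mul_le_mul_left
    ((mul_comm k #R).trans_le (hmult.trans (sum_mult_le_mul_sum_classCard hL hclosed))) hk
  omega

lemma not_isSlack_of_mem_deficientColors {c : ℕ} (hc : c ∈ deficientColors L k f) :
    ¬ IsSlack L k f c := by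
  obtain ⟨-, hm, h0⟩ := mem_filter.1 hc
  simp only [IsSlack, not_or]
  omega

variable [DecidableEq V]

lemma classCard_update_self (h : f v ≠ a) :
    classCard (Function.update f v a) a = classCard f a + 1 := by
  have : univ.filter (fun w => Function.update f v a w = a) =
      insert v (univ.filter fun w => f w = a) := by
    ext w
    by_cases hw : w = v <;> simp [hw, Function.update_apply]
  rw [classCard, this, card_insert_of_notMem (by simpa using h), classCard]

lemma classCard_update_apply_add_one (h : f v ≠ a) :
    classCard (Function.update f v a) (f v) + 1 = classCard f (f v) := by
  have : univ.filter (fun w => Function.update f v a w = f v) =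
      (univ.filter fun w => f w = f v).erase v := by
    ext w
    by_cases hw : w = v <;> simp [hw, Function.update_apply, Ne.symm h]
  rw [classCard, this, card_erase_add_one (by simp), classCard]

lemma classCard_update_of_ne {c : ℕ} (ha : c ≠ a) (hv : c ≠ f v) :
    classCard (Function.update f v a) c = classCard f c := by
  unfold classCard
  congr 1
  ext w
  by_cases hw : w = v
  · subst hw; simp [Ne.symm ha, Ne.symm hv]
  · simp [hw]

lemma IsSlack.update {c : ℕ} (hs : IsSlack L k f c) (ha : c ≠ a) (hv : c ≠ f v) :
    IsSlack L k (Function.update f v a) c := by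
  rwa [IsSlack, classCard_update_of_ne ha hv]

lemma IsNonExcessive.update (hk : 0 < k) (hf : IsNonExcessive G L k f) (hv : a ∈ L v)
    (h0 : classCard f a = 0) : IsNonExcessive G L k (Function.update f v a) := by
  have ha := classCard_eq_zero_iff.1 h0
  refine ⟨hf.1.update hv ha, fun c => ?_⟩
  rcases eq_or_ne c a with rfl | hca
  · rw [classCard_update_self (ha v), h0]
    have := mult_pos_of_mem hv
    exact (Nat.one_le_div_iff hk).2 (by omega)
  rcases eq_or_ne c (f v) with rfl | hcv
  · have := classCard_update_apply_add_one (ha v)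
    have := hf.2 (f v)
    omega
  · rw [classCard_update_of_ne hca hcv]
    exact hf.2 c

lemma deficientColors_update_subset (h : f v ≠ a) :
    deficientColors L k (Function.update f v a) ⊆
      insert (f v) ((deficientColors L k f).erase a) := by
  intro c hc
  obtain ⟨hpal, hm, h0⟩ := mem_filter.1 hc
  rcases eq_or_ne c (f v) with rfl | hcv
  · exact mem_insert_self _ _
  rcases eq_or_ne c a with rfl | hca
  · rw [classCard_update_self h] at h0
    omega
  rw [classCard_update_of_ne hca hcv] at h0
  exact mem_insert_of_mem (mem_erase.2 ⟨hca, mem_filter.2 ⟨hpal, hm, h0⟩⟩)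

lemma apply_notMem_deficientColors_update (h : f v ≠ a) (hs : IsSlack L k f (f v)) :
    f v ∉ deficientColors L k (Function.update f v a) := by
  have := classCard_update_apply_add_one h
  simp only [deficientColors, mem_filter, not_and]
  rcases hs with hs | hs <;> omega

lemma apply_mem_deficientColors_update (hf : IsProperListColoring G L f) (h : f v ≠ a)
    (hs : ¬ IsSlack L k f (f v)) :
    f v ∈ deficientColors L k (Function.update f v a) := by
  have := classCard_update_apply_add_one h
  have := classCard_apply_pos (f := f) (v := v)
  simp only [IsSlack, not_or] at hs
  exact mem_filter.2 ⟨mem_biUnion.2 ⟨v, mem_univ v, hf.1 v⟩, by omega, by omega⟩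

lemma exists_deficientColors_subset_erase_of_isChain (hk : 0 < k) :
    ∀ (l : List ℕ) {f : V → ℕ} {c₀ : ℕ}, IsNonExcessive G L k f →
      c₀ ∈ deficientColors L k f → (c₀ :: l).IsChain (Recolorable L f) →
      IsSlack L k f ((c₀ :: l).getLast (List.cons_ne_nil _ _)) →
      ∃ f', IsNonExcessive G L k f' ∧
        deficientColors L k f' ⊆ (deficientColors L k f).erase c₀
  | [], _, _, _, hc₀, _, hs => absurd hs (not_isSlack_of_mem_deficientColors hc₀)
  | c :: t, f, c₀, hf, hc₀, hch, hs => by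
    obtain ⟨⟨v, rfl, hv⟩, hch⟩ := List.isChain_cons_cons.1 hch
    -- recoloring `v` only breaks links of the chain that return to `f v`
    by_cases hct : f v ∈ t
    · obtain ⟨t₁, t₂, rfl⟩ := List.append_of_mem hct
      refine exists_deficientColors_subset_erase_of_isChain hk (f v :: t₂) hf hc₀
        (List.isChain_cons_cons.2 ⟨⟨v, rfl, hv⟩, (List.isChain_cons_split.1 hch).2⟩) ?_
      simpa [List.getLast_append] using hs
    · have h0 := (mem_filter.1 hc₀).2.2
      have hne : f v ≠ c₀ := classCard_eq_zero_iff.1 h0 v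
      have hf₁ := hf.update hk hv h0
      have hsub := deficientColors_update_subset (L := L) (k := k) hne
      by_cases hslack : IsSlack L k f (f v)
      · exact ⟨_, hf₁, (subset_insert_iff_of_notMem
          (apply_notMem_deficientColors_update hne hslack)).1 hsub⟩
      have hch₁ : (f v :: t).IsChain (Recolorable L (Function.update f v c₀)) :=
        hch.imp_of_mem_tail_imp fun x y _ hy ⟨w, hw, hxw⟩ =>
          ⟨w, by rwa [Function.update_of_ne (by rintro rfl; exact hct (hw ▸ hy))], hxw⟩
      rw [List.getLast_cons (List.cons_ne_nil _ _)] at hs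
      have hs₁ := hs.update
        (fun h => not_isSlack_of_mem_deficientColors hc₀ (by rwa [h] at hs))
        fun h => hslack (by rwa [h] at hs)
      obtain ⟨f', hf', hsub'⟩ := exists_deficientColors_subset_erase_of_isChain hk t hf₁
        (apply_mem_deficientColors_update hf.1 hne hslack) hch₁ hs₁
      exact ⟨f', hf', hsub'.trans (subset_insert_iff.1 hsub)⟩
termination_by l => l.length

end Recoloring

section Proportional

variable {V : Type*} [Fintype V] {G : SimpleGraph V} {L : V → Finset ℕ} {k : ℕ}

lemma exists_isNonExcessive_deficientColors_eq_empty (hk : 0 < k) (hL : ∀ v, #(L v) ≤ k)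
    {f : V → ℕ} (hf : IsNonExcessive G L k f) :
    ∃ f', IsNonExcessive G L k f' ∧ deficientColors L k f' = ∅ := by
  classical
  induction h : #(deficientColors L k f) using Nat.strong_induction_on generalizing f with
  | _ n ih =>
  obtain he | ⟨c₀, hc₀⟩ := (deficientColors L k f).eq_empty_or_nonempty
  · exact ⟨f, hf, he⟩
  obtain ⟨c₁, hreach, hs⟩ := exists_reflTransGen_isSlack hk hL (mem_filter.1 hc₀).2.2
  obtain ⟨l, hch, rfl⟩ := List.exists_isChain_cons_of_relationReflTransGen hreach
  obtain ⟨f₁, hf₁, hsub⟩ :=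
    exists_deficientColors_subset_erase_of_isChain hk l hf hc₀ hch hs
  exact ih _ (h ▸ card_lt_card (hsub.trans_ssubset (erase_ssubset hc₀))) hf₁ rfl

lemma eq_div_or_eq_ceilDiv_of_lt_two_mul {m n : ℕ} (hpos : 0 < m) (hm : m < 2 * k)
    (hn : n ≤ (m + k - 1) / k) (hused : k ≤ m → 0 < n) :
    n = m / k ∨ n = (m + k - 1) / k := by
  have hk : 0 < k := by omega
  rcases le_or_gt k m with hkm | hmk
  · have h1 : m / k = 1 := Nat.div_eq_of_lt_le (by omega) (by omega)
    have h2 : (m + k - 1) / k < 3 := Nat.div_lt_of_lt_mul (by omega)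
    have := hused hkm
    omega
  · have h1 : m / k = 0 := Nat.div_eq_of_lt hmk
    have h2 : (m + k - 1) / k = 1 := Nat.div_eq_of_lt_le (by omega) (by omega)
    omega

lemma IsNonExcessive.isProportionalColoring {f : V → ℕ} (hf : IsNonExcessive G L k f)
    (hmult : ∀ c ∈ palette L, mult L c < 2 * k) (he : deficientColors L k f = ∅) :
    IsProportionalColoring G L k f := by
  refine ⟨hf.1, fun c hc => eq_div_or_eq_ceilDiv_of_lt_two_mul (mult_pos_of_mem_palette hc)
    (hmult c hc) (hf.2 c) fun hm => Nat.pos_of_ne_zero fun h0 => ?_⟩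
  exact notMem_empty c (he ▸ mem_filter.2 ⟨hc, hm, h0⟩)

end Proportional

/-- If `L` is a `k`-assignment with every color of multiplicity `< 2k`,
and there is a proper `L`-coloring using every color at most `⌈η(c)/k⌉` times,
then `G` has a proportional `L`-coloring. -/
theorem stmt6 {V : Type*} [Fintype V] (G : SimpleGraph V) (L : V → Finset ℕ) (k : ℕ)
    (hL : IsKAssignment L k) (hmult : ∀ c ∈ palette L, mult L c < 2 * k)
    (hf : ∃ f : V → ℕ, IsProperListColoring G L f ∧
      ∀ c, (Finset.univ.filter (fun v => f v = c)).card ≤ (mult L c + k - 1) / k) :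
    ∃ f, IsProportionalColoring G L k f := by
  obtain ⟨f₀, hf₀⟩ := hf
  obtain rfl | hk := Nat.eq_zero_or_pos k
  · exact ⟨f₀, hf₀.1, fun c hc => absurd (hmult c hc) (Nat.not_lt_zero _)⟩
  obtain ⟨f, hf, he⟩ :=
    exists_isNonExcessive_deficientColors_eq_empty hk (fun v => (hL v).le) hf₀
  exact ⟨f, hf.isProportionalColoring hmult he⟩
end

section
/- For all natural numbers n, m ≥ 1, if L is a k-assignment for the complete bipartite graph K_{n,m} such that η_L(c) ≤ k for every color c in the palette, then K_{n,m} has a proportional L-coloring. -/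
/-!
Every colour `c` of the palette has `1 ≤ η(c) ≤ k`, so a proportional colouring may use `c` at
most once, and must use it exactly once when `η(c) = k`. It therefore suffices to find an injective
`L`-colouring whose image contains every colour of multiplicity `k`; any injective colouring is
proper, whatever the graph. Such a colouring comes from Hall's theorem: double counting the
incidences between vertices and colours shows `|S| ≤ |L(S)|` for every vertex set `S`, and that at
most `|V| - |S|` colours of multiplicity `k` lie outside `L(S)`. Adding `|palette| - |V|` dummy
vertices whose lists are the colours of multiplicity `< k` keeps Hall's condition, and a system of
distinct representatives of the padded lists is a bijection onto the palette.
-/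

open Finset SimpleGraph

variable {V : Type*} [Fintype V] {L : V → Finset ℕ} {k : ℕ}

lemma sum_mult_eq_sum_card_inter (L : V → Finset ℕ) (C : Finset ℕ) :
    ∑ c ∈ C, mult L c = ∑ v, #(L v ∩ C) := by
  simp only [mult, card_filter]
  rw [sum_comm]
  refine sum_congr rfl fun v _ => ?_
  rw [← card_filter]
  congr 1
  ext c
  simp [and_comm]

lemma card_mul_le_sum_mult_biUnion (hL : IsKAssignment L k) (S : Finset V) :
    #S * k ≤ ∑ c ∈ S.biUnion L, mult L c := by
  rw [sum_mult_eq_sum_card_inter]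
  calc #S * k = ∑ v ∈ S, #(L v ∩ S.biUnion L) := by
        rw [card_eq_sum_ones, sum_mul]
        refine sum_congr rfl fun v hv => ?_
        rw [inter_eq_left.mpr (subset_biUnion_of_mem L hv), hL v, one_mul]
    _ ≤ ∑ v, #(L v ∩ S.biUnion L) := sum_le_sum_of_subset (subset_univ S)

lemma card_le_card_biUnion_of_mult_le (hk : 0 < k) (hL : IsKAssignment L k)
    (hmult : ∀ c, mult L c ≤ k) (S : Finset V) : #S ≤ #(S.biUnion L) := by
  refine Nat.le_of_mul_le_mul_right ?_ hk
  calc #S * k ≤ ∑ c ∈ S.biUnion L, mult L c := card_mul_le_sum_mult_biUnion hL S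
    _ ≤ #(S.biUnion L) • k := sum_le_card_nsmul _ _ _ fun c _ => hmult c

def fullColors (L : V → Finset ℕ) (k : ℕ) : Finset ℕ :=
  (palette L).filter fun c => mult L c = k

lemma card_add_card_fullColors_sdiff_le (hk : 0 < k) (hL : IsKAssignment L k) (S : Finset V) :
    #S + #(fullColors L k \ S.biUnion L) ≤ Fintype.card V := by
  classical
  set X := fullColors L k \ S.biUnion L
  have hX : #X * k = ∑ c ∈ X, mult L c :=
    (sum_const_nat fun c hc => (mem_filter.mp (mem_sdiff.mp hc).1).2).symm
  have hXS : ∀ v ∈ univ, v ∉ Sᶜ → #(L v ∩ X) = 0 := by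
    intro v _ hv
    rw [card_eq_zero, eq_empty_iff_forall_notMem]
    intro c hc
    exact (mem_sdiff.mp (mem_inter.mp hc).2).2
      (mem_biUnion.mpr ⟨v, by simpa using hv, (mem_inter.mp hc).1⟩)
  have hXk : #X * k ≤ (Fintype.card V - #S) * k :=
    calc #X * k = ∑ v ∈ Sᶜ, #(L v ∩ X) := by
          rw [hX, sum_mult_eq_sum_card_inter, sum_subset (subset_univ _) hXS]
      _ ≤ #Sᶜ • k :=
          sum_le_card_nsmul _ _ _ fun v _ => (hL v).symm ▸ card_le_card inter_subset_left
      _ = (Fintype.card V - #S) * k := by rw [card_compl, smul_eq_mul]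
  have hSV := card_le_univ S
  have hXV := Nat.le_of_mul_le_mul_right hXk hk
  omega

def paddedLists (L : V → Finset ℕ) (k : ℕ) :
    V ⊕ Fin (#(palette L) - Fintype.card V) → Finset ℕ :=
  Sum.elim L fun _ => palette L \ fullColors L k

lemma card_le_card_biUnion_paddedLists (hk : 0 < k) (hL : IsKAssignment L k)
    (hmult : ∀ c, mult L c ≤ k) (s : Finset (V ⊕ Fin (#(palette L) - Fintype.card V))) :
    #s ≤ #(s.biUnion (paddedLists L k)) := by
  have hleft : s.toLeft.biUnion L ⊆ s.biUnion (paddedLists L k) := fun c hc => by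
    obtain ⟨v, hv, hcv⟩ := mem_biUnion.mp hc
    exact mem_biUnion.mpr ⟨Sum.inl v, mem_toLeft.mp hv, hcv⟩
  have hsplit : #s.toLeft + #s.toRight = #s := card_toLeft_add_card_toRight
  rcases s.toRight.eq_empty_or_nonempty with hR | ⟨d, hd⟩
  · rw [hR, card_empty] at hsplit
    calc #s = #s.toLeft := by omega
      _ ≤ #(s.toLeft.biUnion L) := card_le_card_biUnion_of_mult_le hk hL hmult _
      _ ≤ _ := card_le_card hleft
  · set K := fullColors L k
    set N := s.toLeft.biUnion L
    have hdummy : palette L \ K ⊆ s.biUnion (paddedLists L k) := fun c hc =>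
      mem_biUnion.mpr ⟨Sum.inr d, mem_toRight.mp hd, hc⟩
    have hcover : #(palette L \ K) + #(K ∩ N) ≤ #(s.biUnion (paddedLists L k)) := by
      rw [← card_union_of_disjoint (disjoint_sdiff_self_left.mono_right inter_subset_left)]
      exact card_le_card (union_subset hdummy fun c hc => hleft (mem_inter.mp hc).2)
    have hKP : #K ≤ #(palette L) := card_le_card (filter_subset _ _)
    have hPK : #(palette L \ K) = #(palette L) - #K := card_sdiff_of_subset (filter_subset _ _)
    have hK : #(K \ N) + #(K ∩ N) = #K := card_sdiff_add_card_inter K N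
    have hright : #s.toRight ≤ #(palette L) - Fintype.card V :=
      (card_le_univ _).trans (Fintype.card_fin _).le
    have hpadded : 0 < #(palette L) - Fintype.card V := d.pos
    have hdef : #s.toLeft + #(K \ N) ≤ Fintype.card V :=
      card_add_card_fullColors_sdiff_le hk hL s.toLeft
    omega

lemma exists_injective_listColoring_covering_fullColors (hk : 0 < k) (hL : IsKAssignment L k)
    (hmult : ∀ c, mult L c ≤ k) :
    ∃ f : V → ℕ, Function.Injective f ∧ (∀ v, f v ∈ L v) ∧
      ∀ c ∈ fullColors L k, ∃ v, f v = c := by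
  obtain ⟨F, hFinj, hFmem⟩ := (all_card_le_biUnion_card_iff_exists_injective _).mp
    (card_le_card_biUnion_paddedLists hk hL hmult)
  have hFP : ∀ i, F i ∈ palette L
    | .inl v => subset_biUnion_of_mem L (mem_univ v) (hFmem (.inl v))
    | .inr d => (mem_sdiff.mp (hFmem (.inr d))).1
  have himage : univ.image F = palette L := by
    refine eq_of_subset_of_card_le (fun c hc => ?_) ?_
    · obtain ⟨i, _, rfl⟩ := mem_image.mp hc
      exact hFP i
    · have hVP : #(univ : Finset V) ≤ #(palette L) :=
        card_le_card_biUnion_of_mult_le hk hL hmult univ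
      rw [card_univ] at hVP
      rw [card_image_of_injective _ hFinj, card_univ, Fintype.card_sum, Fintype.card_fin,
        Nat.add_sub_cancel' hVP]
  refine ⟨F ∘ Sum.inl, hFinj.comp Sum.inl_injective, fun v => hFmem (.inl v), fun c hc => ?_⟩
  obtain ⟨i, -, rfl⟩ := mem_image.mp (himage ▸ (mem_filter.mp hc).1)
  rcases i with v | d
  · exact ⟨v, rfl⟩
  · exact absurd hc (mem_sdiff.mp (hFmem (.inr d))).2

lemma isProportionalColoring_of_injective (G : SimpleGraph V) (hk : 0 < k)
    (hmult : ∀ c, mult L c ≤ k) {f : V → ℕ} (hinj : Function.Injective f)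
    (hfL : ∀ v, f v ∈ L v)
    (hcover : ∀ c ∈ fullColors L k, ∃ v, f v = c) : IsProportionalColoring G L k f := by
  refine ⟨⟨hfL, fun u w huw hf => G.ne_of_adj huw (hinj hf)⟩, fun c hc => ?_⟩
  have hle : #(univ.filter fun v => f v = c) ≤ 1 :=
    card_le_one.mpr fun a ha b hb => hinj ((mem_filter.mp ha).2.trans (mem_filter.mp hb).2.symm)
  have hpos : 0 < mult L c := by
    obtain ⟨v, -, hv⟩ := mem_biUnion.mp hc
    exact card_pos.mpr ⟨v, mem_filter.mpr ⟨mem_univ v, hv⟩⟩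
  rcases (hmult c).lt_or_eq with hlt | heq
  · rw [Nat.div_eq_of_lt hlt, Nat.div_eq_of_lt_le (by omega : 1 * k ≤ mult L c + k - 1)
      (by omega : mult L c + k - 1 < (1 + 1) * k)]
    omega
  · obtain ⟨v, hv⟩ := hcover c (mem_filter.mpr ⟨hc, heq⟩)
    have hused : 0 < #(univ.filter fun v => f v = c) := card_pos.mpr ⟨v, by simp [hv]⟩
    left
    rw [heq, Nat.div_self hk]
    omega

theorem exists_isProportionalColoring_of_mult_le (G : SimpleGraph V) (hk : 0 < k)
    (hL : IsKAssignment L k) (hmult : ∀ c, mult L c ≤ k) :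
    ∃ f, IsProportionalColoring G L k f := by
  obtain ⟨f, hinj, hfL, hcover⟩ := exists_injective_listColoring_covering_fullColors hk hL hmult
  exact ⟨f, isProportionalColoring_of_injective G hk hmult hinj hfL hcover⟩

theorem stmt7_general (n m k : ℕ) (hk : 1 ≤ k)
    (L : (Fin n ⊕ Fin m) → Finset ℕ) (hL : IsKAssignment L k)
    (hmult : ∀ c, mult L c ≤ k) :
    ∃ f, IsProportionalColoring (KBip n m) L k f :=
  exists_isProportionalColoring_of_mult_le _ hk hL hmult

/-- For `n, m ≥ 1`, if `L` is a `k`-assignment (`k ≥ 1`) for `K_{n,m}` with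
every color of multiplicity at most `k`, then `K_{n,m}` has a proportional `L`-coloring. -/
theorem stmt7 (n m k : ℕ) (hn : 1 ≤ n) (hm : 1 ≤ m) (hk : 1 ≤ k)
    (L : (Fin n ⊕ Fin m) → Finset ℕ) (hL : IsKAssignment L k)
    (hmult : ∀ c, mult L c ≤ k) :
    ∃ f, IsProportionalColoring (KBip n m) L k f :=
  stmt7_general n m k hk L hL hmult
end

section
/- Let t ≥ 2, let n_1,…,n_t be even positive integers, and let s = Σ_{i=1}^t n_i/2. If max_i n_i ≤ s, then the complete multipartite graph K_{n_1,…,n_t} is not proportionally s-choosable; hence χ_pc(K_{n_1,…,n_t}) ≥ 1 + Σ_{i=1}^t n_i/2. -/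
open Finset SimpleGraph

/-!
For `0 < k < s`, choose a set `A` of `2k` vertices meeting some part in an odd number of
vertices, and give the vertices of `A` the list `[0, k)` and all others `[k, 2k)`. Every color
`c < k` has `η(c) = 2k`, so its class has exactly two vertices; as color classes of a complete
multipartite graph lie inside parts, `A` would meet every part evenly.

For `k = s`, take `L(u) = [0, s-1) ∪ {s-1+i}` on part `i`. The colors below `s-1` again get
classes of size two, covering only `2(s-1)` of the `2s` vertices. The private color `s-1+i` has
`η = nᵢ ≤ s`, so it is used at most once, and by parity of `nᵢ` not at all.
-/

lemma mem_palette {V : Type*} [Fintype V] {L : V → Finset ℕ} {c : ℕ} (v : V) (h : c ∈ L v) :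
    c ∈ palette L :=
  mem_biUnion.2 ⟨v, mem_univ v, h⟩

lemma mult_eq_card_of_forall_mem {V : Type*} [Fintype V] {L : V → Finset ℕ} {c : ℕ}
    (h : ∀ v, c ∈ L v) : mult L c = Fintype.card V := by
  simp [mult, h]

namespace IsProportionalColoring

variable {V : Type*} [Fintype V] {G : SimpleGraph V} {L : V → Finset ℕ} {k c : ℕ}
  {f : V → ℕ}

lemma card_eq_two (hf : IsProportionalColoring G L k f) (hc : c ∈ palette L)
    (hk : 0 < k) (hmult : mult L c = 2 * k) : #{v | f v = c} = 2 := by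
  have hceil : (2 * k + k - 1) / k = 2 := by
    rw [show 2 * k + k - 1 = (k - 1) + k * 2 by omega, Nat.add_mul_div_left _ _ hk,
      Nat.div_eq_of_lt (by omega)]
  rcases hf.2 c hc with h | h <;> simp_all

lemma card_le_one (hf : IsProportionalColoring G L k f) (hmult : mult L c ≤ k) :
    #{v | f v = c} ≤ 1 := by
  by_cases hc : c ∈ palette L
  · rcases Nat.eq_zero_or_pos k with rfl | hk
    · rcases hf.2 c hc with h | h <;> simp_all
    have hfloor : mult L c / k < 2 := Nat.div_lt_of_lt_mul (by omega)
    have hceil : (mult L c + k - 1) / k < 2 := Nat.div_lt_of_lt_mul (by omega)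
    rcases hf.2 c hc with h | h <;> omega
  · suffices h : ({v | f v = c} : Finset V) = ∅ by simp [h]
    exact filter_false_of_mem fun v _ hv => hc (mem_palette v (hv ▸ hf.1.1 v))

end IsProportionalColoring

lemma proportionallyChoosable_of_card_lt {V : Type*} [Fintype V] (G : SimpleGraph V) {k : ℕ}
    (hk : Fintype.card V < k) : ProportionallyChoosable G k := by
  intro L hL
  have hall : ∀ S : Finset V, #S ≤ #(S.biUnion L) := by
    intro S
    rcases S.eq_empty_or_nonempty with rfl | ⟨v, hv⟩
    · simp
    calc #S ≤ k := (card_le_univ S).trans hk.le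
      _ = #(L v) := (hL v).symm
      _ ≤ #(S.biUnion L) := card_le_card (subset_biUnion_of_mem L hv)
  obtain ⟨f, hinj, hmem⟩ := (all_card_le_biUnion_card_iff_exists_injective L).1 hall
  refine ⟨f, ⟨hmem, fun u w huw h => G.ne_of_adj huw (hinj h)⟩, fun c hc => ?_⟩
  have hclass : #{v | f v = c} ≤ 1 :=
    card_le_one.2 fun a ha b hb => hinj <| by simp_all
  have hmult : mult L c < k := (card_le_univ _).trans_lt hk
  have hmult_pos : 0 < mult L c := by
    obtain ⟨v, -, hv⟩ := mem_biUnion.1 hc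
    exact card_pos.2 ⟨v, by simp [hv]⟩
  have hfloor : mult L c / k = 0 := Nat.div_eq_of_lt hmult
  have hceil : (mult L c + k - 1) / k = 1 :=
    Nat.div_eq_of_lt_le (by omega) (by omega)
  omega

lemma not_proportionallyChoosable_zero {V : Type*} [Fintype V] [Nonempty V]
    (G : SimpleGraph V) : ¬ ProportionallyChoosable G 0 := fun h => by
  obtain ⟨f, hf, -⟩ := h (fun _ => ∅) fun _ => rfl
  exact notMem_empty _ (hf.1 (Classical.arbitrary V))

lemma le_propChoiceNumber {V : Type*} [Fintype V] {G : SimpleGraph V} {m : ℕ}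
    (h : ∀ k < m, ¬ ProportionallyChoosable G k) : m ≤ propChoiceNumber G :=
  le_csInf ⟨_, proportionallyChoosable_of_card_lt G (Nat.lt_succ_self _)⟩
    fun k hk => not_lt.1 fun hlt => h k hlt hk

namespace completeMultipartiteGraph

variable {ι : Type*} {V : ι → Type*} {f : (Σ i, V i) → ℕ}

lemma fst_eq_of_color_eq (hf : ∀ ⦃u w⦄, (completeMultipartiteGraph V).Adj u w → f u ≠ f w)
    {u w : Σ i, V i} (h : f u = f w) : u.1 = w.1 :=
  not_not.1 fun hne => hf hne h

variable [Fintype ι] [DecidableEq ι] [∀ i, Fintype (V i)]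

lemma card_filter_fst_eq (i : ι) : #{v : Σ j, V j | v.1 = i} = Fintype.card (V i) := by
  rw [card_filter, ← univ_sigma_univ, sum_sigma]
  simp [apply_ite Finset.card]

lemma even_card_fst_eq_and_mem
    (hf : ∀ ⦃u w⦄, (completeMultipartiteGraph V).Adj u w → f u ≠ f w)
    {C : Finset ℕ} (hC : ∀ c ∈ C, Even #{v | f v = c}) (i : ι) :
    Even #{v : Σ j, V j | v.1 = i ∧ f v ∈ C} := by
  rw [card_eq_sum_card_fiberwise (f := f) (t := C) fun v hv => (mem_filter.1 hv).2.2]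
  refine even_sum _ fun c hc => ?_
  by_cases hi : ∃ u, u.1 = i ∧ f u = c
  · obtain ⟨u, rfl, rfl⟩ := hi
    suffices h : ({v : Σ j, V j | v.1 = u.1 ∧ f v ∈ C} : Finset _).filter (f · = f u) =
        ({v | f v = f u} : Finset _) by
      rw [h]; exact hC _ hc
    ext v
    simp only [mem_filter, mem_univ, true_and, and_iff_right_iff_imp]
    exact fun hv => ⟨fst_eq_of_color_eq hf hv, hv ▸ hc⟩
  · suffices h : ({v : Σ j, V j | v.1 = i ∧ f v ∈ C} : Finset _).filter (f · = c) = ∅ by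
      simp [h]
    simp only [filter_eq_empty_iff, mem_filter, mem_univ, true_and]
    exact fun v hv hc => hi ⟨v, hv.1, hc⟩

lemma even_card_fst_eq_and_notMem
    (hf : ∀ ⦃u w⦄, (completeMultipartiteGraph V).Adj u w → f u ≠ f w)
    {C : Finset ℕ} (hC : ∀ c ∈ C, Even #{v | f v = c}) {i : ι}
    (hi : Even (Fintype.card (V i))) :
    Even #{v : Σ j, V j | v.1 = i ∧ f v ∉ C} := by
  have hsplit := card_filter_add_card_filter_not (s := {v : Σ j, V j | v.1 = i}) (f · ∈ C)
  simp only [filter_filter, card_filter_fst_eq] at hsplit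
  exact (Nat.even_add.1 (hsplit ▸ hi)).1 (even_card_fst_eq_and_mem hf hC i)

end completeMultipartiteGraph

lemma Finset.exists_card_eq_odd_card_filter {α : Type*} [Fintype α] [DecidableEq α]
    (p : α → Prop) [DecidablePred p] {m : ℕ} (hp : 0 < #{a | p a})
    (hp' : #{a | p a} < Fintype.card α) (hm0 : 0 < m) (hm : m < Fintype.card α) :
    ∃ A : Finset α, #A = m ∧ Odd #{a ∈ A | p a} := by
  have hsplit : #{a | p a} + #{a | ¬ p a} = Fintype.card α :=
    card_filter_add_card_filter_not (s := univ) p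
  obtain ⟨a, ha_odd, ha_le, ha_le_m, hm_le⟩ :
      ∃ a, a % 2 = 1 ∧ a ≤ #{a | p a} ∧ a ≤ m ∧ m ≤ a + #{a | ¬ p a} := by
    by_cases h : m ≤ #{a | ¬ p a} + 1
    · exact ⟨1, by omega⟩
    rcases Nat.even_or_odd (m - #{a | ¬ p a}) with ⟨r, hr⟩ | ⟨r, hr⟩
    · exact ⟨m - #{a | ¬ p a} + 1, by omega⟩
    · exact ⟨m - #{a | ¬ p a}, by omega⟩
  obtain ⟨S, hS, hS_card⟩ := exists_subset_card_eq ha_le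
  obtain ⟨T, hT, hT_card⟩ := exists_subset_card_eq (s := {a | ¬ p a}) (n := m - a) (by omega)
  have hST : Disjoint S T := (disjoint_filter_filter_not univ univ p).mono hS hT
  refine ⟨S ∪ T, by rw [card_union_of_disjoint hST]; omega, ?_⟩
  rw [filter_union, filter_true_of_mem fun x hx => (mem_filter.1 (hS hx)).2,
    filter_false_of_mem fun x hx => (mem_filter.1 (hT hx)).2, union_empty, Nat.odd_iff]
  omega

lemma not_proportionallyChoosable_of_odd_card_filter {ι : Type*} [Fintype ι] [DecidableEq ι]
    {V : ι → Type*} [∀ i, Fintype (V i)] {k : ℕ} (hk : 0 < k) (A : Finset (Σ i, V i))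
    (hA : #A = 2 * k) (i : ι) (hodd : Odd #{v ∈ A | v.1 = i}) :
    ¬ ProportionallyChoosable (completeMultipartiteGraph V) k := by
  classical
  intro h
  let L : (Σ i, V i) → Finset ℕ := fun v => if v ∈ A then range k else Ico k (2 * k)
  obtain ⟨f, hf⟩ := h L fun v => by by_cases hv : v ∈ A <;> simp [L, hv]; omega
  have hcolor_lt : ∀ v, f v < k ↔ v ∈ A := fun v => by
    have := hf.1.1 v
    by_cases hv : v ∈ A <;> simp_all [L]
  have hclass : ∀ c ∈ range k, Even #{v | f v = c} := fun c hc => by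
    obtain ⟨v, hv⟩ : A.Nonempty := card_pos.1 (by omega)
    have hmult : mult L c = #A := by
      rw [mult]
      congr 1
      ext w
      by_cases hw : w ∈ A <;> simp_all [L]
    rw [hf.card_eq_two (mem_palette v (by simp_all [L])) hk (hmult.trans hA)]
    exact even_two
  have heven := completeMultipartiteGraph.even_card_fst_eq_and_mem hf.1.2 hclass i
  rw [← Nat.not_odd_iff_even] at heven
  exact heven (by convert hodd using 2; ext v; simp [hcolor_lt, and_comm])

lemma not_proportionallyChoosable_of_even_of_le_half {t : ℕ} {n : Fin t → ℕ} {s : ℕ}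
    (hs : 0 < s) (hsum : ∑ i, n i = 2 * s) (heven : ∀ i, Even (n i)) (hmax : ∀ i, n i ≤ s) :
    ¬ ProportionallyChoosable (completeMultipartiteGraph fun i => Fin (n i)) s := by
  intro h
  let L : (Σ i, Fin (n i)) → Finset ℕ := fun v => insert (s - 1 + v.1) (range (s - 1))
  obtain ⟨f, hf⟩ := h L fun v => by simp [L]; omega
  have hcard : Fintype.card (Σ i, Fin (n i)) = 2 * s := by simp [hsum]
  obtain ⟨v₀⟩ : Nonempty (Σ i, Fin (n i)) := Fintype.card_pos_iff.1 (by omega)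
  have hclass : ∀ c ∈ range (s - 1), #{v | f v = c} = 2 := fun c hc => by
    have hmem : ∀ v, c ∈ L v := fun v => by simp_all [L]
    exact hf.card_eq_two (mem_palette v₀ (hmem v₀)) hs
      ((mult_eq_card_of_forall_mem hmem).trans hcard)
  have hprivate (i) : #{v : Σ j, Fin (n j) | v.1 = i ∧ f v ∉ range (s - 1)} = 0 := by
    have hmult : mult L (s - 1 + i) = n i := by
      rw [mult, ← Fintype.card_fin (n i),
        ← completeMultipartiteGraph.card_filter_fst_eq (V := fun j => Fin (n j)) i]
      congr 1
      ext v
      simp [L, Fin.val_inj, eq_comm]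
    have hle : #{v : Σ j, Fin (n j) | v.1 = i ∧ f v ∉ range (s - 1)} ≤ 1 := by
      refine (card_le_card fun v hv => ?_).trans (hf.card_le_one (hmult.trans_le (hmax i)))
      simp only [mem_filter, mem_univ, true_and, mem_range] at hv ⊢
      have := hf.1.1 v
      simp only [L, mem_insert, mem_range, hv.1] at this
      omega
    have := completeMultipartiteGraph.even_card_fst_eq_and_notMem hf.1.2
      (fun c hc => (hclass c hc) ▸ even_two) (by simpa using heven i)
    rw [Nat.even_iff] at this
    omega
  have hmaps : ((univ : Finset (Σ i, Fin (n i))) : Set _).MapsTo f (range (s - 1)) :=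
    fun v _ => by_contra fun hv =>
      notMem_empty v (card_eq_zero.1 (hprivate v.1) ▸ mem_filter.2 ⟨mem_univ v, rfl, hv⟩)
  have := card_eq_sum_card_fiberwise hmaps
  rw [card_univ, hcard, sum_congr rfl fun c hc => by simpa using hclass c hc, sum_const,
    card_range, smul_eq_mul] at this
  omega

/-- For `t ≥ 2` and even part sizes `n i ≥ 1` with `s = ∑ nᵢ/2` and
`max nᵢ ≤ s`, the complete multipartite graph is not proportionally `s`-choosable,
so `χ_pc ≥ 1 + s`. -/
theorem stmt9 (t : ℕ) (ht : 2 ≤ t) (n : Fin t → ℕ) (hn : ∀ i, 1 ≤ n i)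
    (heven : ∀ i, Even (n i)) (s : ℕ) (hs : s = ∑ i, n i / 2)
    (hmax : ∀ i, n i ≤ s) :
    ¬ ProportionallyChoosable (completeMultipartiteGraph (fun i : Fin t => Fin (n i))) s ∧
      1 + s ≤ propChoiceNumber (completeMultipartiteGraph (fun i : Fin t => Fin (n i))) := by
  have hsum : ∑ i, n i = 2 * s := by
    rw [hs, mul_sum]
    exact sum_congr rfl fun i _ => (Nat.mul_div_cancel' (heven i).two_dvd).symm
  let i₀ : Fin t := ⟨0, by omega⟩
  have hs0 : 0 < s := lt_of_lt_of_le (hn i₀) (hmax i₀)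
  have hnot := not_proportionallyChoosable_of_even_of_le_half hs0 hsum heven hmax
  refine ⟨hnot, le_propChoiceNumber fun k hk => ?_⟩
  obtain rfl | hk0 := Nat.eq_zero_or_pos k
  · have : Nonempty (Σ i, Fin (n i)) := ⟨⟨i₀, ⟨0, hn i₀⟩⟩⟩
    exact not_proportionallyChoosable_zero _
  obtain hks | rfl : k < s ∨ k = s := by omega
  · have hpart : #{v : Σ i, Fin (n i) | v.1 = i₀} = n i₀ := by
      simp [completeMultipartiteGraph.card_filter_fst_eq]
    have hcard : Fintype.card (Σ i, Fin (n i)) = 2 * s := by simp [hsum]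
    obtain ⟨A, hA, hodd⟩ := exists_card_eq_odd_card_filter
      (fun v : Σ i, Fin (n i) => v.1 = i₀) (m := 2 * k) (by rw [hpart]; exact hn i₀)
      (by rw [hpart, hcard]; linarith [hmax i₀]) (by omega) (by omega)
    exact not_proportionallyChoosable_of_odd_card_filter hk0 A hA i₀ hodd
  · exact hnot
end

section
/- For all natural numbers n, m with 2 ≤ n ≤ m: max{n+1, 1 + ⌈m/2⌉} ≤ χ_pc(K_{n,m}) ≤ n + m − 1. -/
open Finset SimpleGraph

/-!
Upper bound. Let `G` have `N ≥ 3` vertices and a non-edge `uw`, and let `L` be an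
`(N - 1)`-assignment. If the palette has only `N - 1` colors, all lists coincide: color
`V \ {w}` bijectively and give `w` the color of `u`. Otherwise an injective `L`-coloring is
proportional as soon as it uses every *heavy* color, one of multiplicity at least `N - 1`. Heavy
colors miss at most one list and, by double counting, number at most `N - 1` when the palette has
more than `N` colors; so Hall's theorem, applied after adding dummy vertices that may take any
non-heavy color, yields such a coloring.

Lower bounds. Each is witnessed by an explicit bad `k`-assignment of `K_{n,m}`, built on two
constraints: a color of multiplicity `2k` (resp. `k`) is used exactly twice (resp. once), and all
uses of a color lie on one side.
-/

theorem eq_div_or_eq_add_sub_one_div_iff {a η k : ℕ} (hk : 0 < k) :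
    a = η / k ∨ a = (η + k - 1) / k ↔ k * a < η + k ∧ η < k * a + k := by
  rw [eq_comm, Nat.div_eq_iff hk, eq_comm (a := a), Nat.div_eq_iff hk, mul_comm a k]
  omega

theorem card_filter_univ_sum {α β : Type*} [Fintype α] [Fintype β] (p : α ⊕ β → Prop)
    [DecidablePred p] : #{x | p x} = #{a | p (Sum.inl a)} + #{b | p (Sum.inr b)} := by
  rw [← card_toLeft_add_card_toRight (u := {x | p x})]
  congr 2 <;> ext <;> simp

theorem exists_eq_of_forall_mem_insert {ι α : Type*} [Fintype ι] [DecidableEq α]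
    {g : ι → α} {a : α} {X : Finset α} (hg : ∀ i, g i ∈ insert a X)
    (hX : ∀ b ∈ X, #{i | g i = b} ≤ 1) (hcard : #X < Fintype.card ι) : ∃ i, g i = a := by
  by_contra! h
  have hmaps : ∀ i ∈ (univ : Finset ι), g i ∈ X := fun i _ =>
    (mem_insert.1 (hg i)).resolve_left (h i)
  have := card_le_mul_card_image_of_maps_to hmaps 1 hX
  rw [card_univ] at this
  omega

section ProportionalColoring

variable {V : Type*} [Fintype V] {G : SimpleGraph V} {L : V → Finset ℕ} {k c : ℕ}
  {f : V → ℕ}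

theorem subset_palette (L : V → Finset ℕ) (v : V) : L v ⊆ palette L :=
  subset_biUnion_of_mem L (mem_univ v)

theorem mult_pos_iff_mem_palette : 0 < mult L c ↔ c ∈ palette L := by
  simp [mult, palette, card_pos, filter_nonempty_iff]

theorem mult_le_card : mult L c ≤ Fintype.card V :=
  card_filter_le _ _

theorem sum_mult_palette (L : V → Finset ℕ) :
    ∑ c ∈ palette L, mult L c = ∑ v, #(L v) := by
  classical
  have := sum_card_bipartiteAbove_eq_sum_card_bipartiteBelow (fun v c => c ∈ L v)
    (s := univ) (t := palette L)
  simp only [bipartiteAbove, bipartiteBelow, filter_mem_eq_inter,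
    inter_eq_right.2 (subset_palette L _)] at this
  exact this.symm

theorem isProportionalColoring_iff (hk : 0 < k) :
    IsProportionalColoring G L k f ↔ IsProperListColoring G L f ∧ ∀ c ∈ palette L,
      k * #{v | f v = c} < mult L c + k ∧ mult L c < k * #{v | f v = c} + k := by
  simp only [IsProportionalColoring, eq_div_or_eq_add_sub_one_div_iff hk]

theorem IsProportionalColoring.card_fiber_eq_of_mult_eq_mul {j : ℕ}
    (hf : IsProportionalColoring G L k f) (hk : 0 < k) (hj : 0 < j) (hmult : mult L c = j * k) :
    #{v | f v = c} = j := by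
  have hc : c ∈ palette L := mult_pos_iff_mem_palette.1 (hmult ▸ Nat.mul_pos hj hk)
  obtain ⟨hlt, hgt⟩ := ((isProportionalColoring_iff hk).1 hf).2 c hc
  rw [hmult] at hlt hgt
  have h1 : #{v | f v = c} < j + 1 := Nat.lt_of_mul_lt_mul_left (a := k) (by linarith)
  have h2 : j < #{v | f v = c} + 1 := Nat.lt_of_mul_lt_mul_left (a := k) (by linarith)
  omega

/-- A vertex `v` and `2k - 1` of its neighbours all receive the list `[k]`, every other list
avoids `[k]`: the color of `v` then has multiplicity at least `2k` but is used only at `v`. -/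
theorem not_proportionallyChoosable_of_forall_adj (v : V) (s : Finset V)
    (hs : ∀ w ∈ s, G.Adj v w) (hk : 2 * k ≤ #s + 1) : ¬ ProportionallyChoosable G k := by
  classical
  intro h
  set L : V → Finset ℕ := fun x => if x = v ∨ x ∈ s then range k else Ico k (2 * k)
  obtain ⟨f, hf⟩ := h L fun x => by
    simp only [L]
    split_ifs <;> simp
    omega
  have hfv : f v < k := by simpa [L] using hf.1.1 v
  have hvs : v ∉ s := fun hv => (hs v hv).ne rfl
  have hmult : #s + 1 ≤ mult L (f v) := by
    rw [← card_insert_of_notMem hvs]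
    exact card_le_card fun x hx => by
      rcases mem_insert.1 hx with rfl | hx <;> simp [L, *]
  have hfiber : #{x | f x = f v} ≤ 1 := by
    refine (card_le_card fun x hx => mem_singleton.2 ?_).trans (card_singleton v).le
    by_contra hxv
    have hx := (mem_filter.1 hx).2
    by_cases hxs : x ∈ s
    · exact hf.1.2 (hs x hxs) hx.symm
    · have := hf.1.1 x
      simp [L, hxv, hxs] at this
      omega
  have hpal := mult_pos_iff_mem_palette.1 (by omega : 0 < mult L (f v))
  have := (((isProportionalColoring_iff (by omega)).1 hf).2 (f v) hpal).2
  have : k * #{x | f x = f v} ≤ k := by simpa using Nat.mul_le_mul_left k hfiber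
  omega

end ProportionalColoring

section UpperBound

variable {V : Type*} [Fintype V] {G : SimpleGraph V} {L : V → Finset ℕ} {c : ℕ}

-- The colors that a proportional `(|V| - 1)`-coloring must use.
def heavyColors (L : V → Finset ℕ) : Finset ℕ :=
  {c ∈ palette L | Fintype.card V - 1 ≤ mult L c}

theorem mem_or_mem_of_mem_heavyColors (hc : c ∈ heavyColors L) {v w : V} (hvw : v ≠ w) :
    c ∈ L v ∨ c ∈ L w := by
  classical
  by_contra! h
  have hmiss : 2 ≤ #{x | c ∉ L x} := by
    rw [← card_pair hvw]
    exact card_le_card fun x hx => by rcases mem_insert.1 hx with rfl | hx <;> simp_all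
  have hsplit := card_filter_add_card_filter_not (s := univ) (fun x => c ∈ L x)
  have hheavy := (mem_filter.1 hc).2
  rw [card_univ] at hsplit
  unfold mult at hheavy
  omega

theorem card_heavyColors_le (hL : IsKAssignment L (Fintype.card V - 1))
    (hP : Fintype.card V < #(palette L)) : #(heavyColors L) ≤ Fintype.card V - 1 := by
  by_contra! hH
  obtain ⟨S, hSH, hS⟩ := exists_subset_card_eq (s := heavyColors L) (n := Fintype.card V)
    (by omega)
  obtain ⟨c, hcP, hcS⟩ := exists_mem_notMem_of_card_lt_card (hS ▸ hP)
  have hSP : insert c S ⊆ palette L := insert_subset hcP (hSH.trans (filter_subset _ _))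
  have hSmult : #S * (Fintype.card V - 1) ≤ ∑ c ∈ S, mult L c :=
    card_nsmul_le_sum S _ _ fun c hc => (mem_filter.1 (hSH hc)).2
  have hcmult := mult_pos_iff_mem_palette.2 hcP
  have hsum : ∑ c ∈ insert c S, mult L c ≤ ∑ c ∈ palette L, mult L c :=
    sum_le_sum_of_subset hSP
  rw [sum_insert hcS, sum_mult_palette, Fintype.sum_congr _ _ hL, sum_const, card_univ,
    smul_eq_mul] at hsum
  rw [hS] at hSmult
  omega

/-- Hall's condition for the vertices together with `|palette L| - |V|` dummy vertices, each of
which may take any non-heavy color. -/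
theorem card_le_card_biUnion_heavyColors (hL : IsKAssignment L (Fintype.card V - 1))
    (hP : Fintype.card V ≤ #(palette L))
    (s : Finset (V ⊕ Fin (#(palette L) - Fintype.card V))) :
    #s ≤ #(s.biUnion (Sum.elim L fun _ => palette L \ heavyColors L)) := by
  classical
  set U := s.biUnion (Sum.elim L fun _ => palette L \ heavyColors L)
  have hs : #s = #s.toLeft + #s.toRight := card_toLeft_add_card_toRight.symm
  have hleft : ∀ v ∈ s.toLeft, L v ⊆ U := fun v hv c hc =>
    mem_biUnion.2 ⟨Sum.inl v, mem_toLeft.1 hv, hc⟩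
  have hleftN : #s.toLeft ≤ Fintype.card V := card_le_univ _
  have hrightd : #s.toRight ≤ #(palette L) - Fintype.card V :=
    (card_le_univ _).trans_eq (Fintype.card_fin _)
  have hpalette : ∀ v w, v ∈ s.toLeft → w ∈ s.toLeft → v ≠ w →
      (palette L \ heavyColors L ⊆ U) → palette L ⊆ U := fun v w hv hw hvw hlight c hc => by
    by_cases hcH : c ∈ heavyColors L
    · rcases mem_or_mem_of_mem_heavyColors hcH hvw with h | h
      exacts [hleft v hv h, hleft w hw h]
    · exact hlight (mem_sdiff.2 ⟨hc, hcH⟩)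
  rcases s.toRight.eq_empty_or_nonempty with hright | ⟨x, hx⟩
  · rw [hright, card_empty] at hs
    rcases s.toLeft.eq_empty_or_nonempty with hempty | ⟨v, hv⟩
    · simp [hs, hempty]
    by_cases hsmall : #s.toLeft ≤ Fintype.card V - 1
    · exact (hs.trans_le hsmall).trans ((hL v).symm.trans_le (card_le_card (hleft v hv)))
    · have huniv : s.toLeft = univ := eq_univ_of_card _ (by omega)
      have : palette L ⊆ U := biUnion_subset.2 fun v _ => hleft v (huniv ▸ mem_univ v)
      exact (hs.trans_le hleftN).trans (hP.trans (card_le_card this))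
  · have hlight : palette L \ heavyColors L ⊆ U := fun c hc =>
      mem_biUnion.2 ⟨Sum.inr x, mem_toRight.1 hx, hc⟩
    have hH := card_heavyColors_le hL (by have := x.pos; omega)
    have hHP : heavyColors L ⊆ palette L := filter_subset _ _
    have hsd := card_sdiff_of_subset hHP
    by_cases hfew : #s.toLeft ≤ Fintype.card V - #(heavyColors L)
    · have := card_le_card hlight
      omega
    · obtain ⟨v, hv, w, hw, hvw⟩ := one_lt_card.1 (by omega : 1 < #s.toLeft)
      have := card_le_card (hpalette v w hv hw hvw hlight)
      omega

theorem exists_injective_surjOn_heavyColors (hL : IsKAssignment L (Fintype.card V - 1))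
    (hP : Fintype.card V ≤ #(palette L)) :
    ∃ f : V → ℕ, Function.Injective f ∧ (∀ v, f v ∈ L v) ∧
      ∀ c ∈ heavyColors L, ∃ v, f v = c := by
  obtain ⟨F, hFinj, hF⟩ := (all_card_le_biUnion_card_iff_exists_injective _).1
    (card_le_card_biUnion_heavyColors hL hP)
  have hFP : ∀ x, F x ∈ palette L := by
    rintro (v | i)
    · exact subset_palette L v (hF (Sum.inl v))
    · exact sdiff_subset (hF (Sum.inr i))
  have himage : univ.image F = palette L := by
    refine eq_of_subset_of_card_le (image_subset_iff.2 fun x _ => hFP x) ?_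
    rw [card_image_of_injective _ hFinj, card_univ, Fintype.card_sum, Fintype.card_fin]
    omega
  refine ⟨F ∘ Sum.inl, hFinj.comp Sum.inl_injective, fun v => hF (Sum.inl v), fun c hc => ?_⟩
  obtain ⟨x | i, -, rfl⟩ := mem_image.1 (himage ▸ (mem_filter.1 hc).1)
  · exact ⟨x, rfl⟩
  · exact absurd hc (mem_sdiff.1 (hF (Sum.inr i))).2

theorem exists_isProportionalColoring_of_card_palette_lt (hV : 3 ≤ Fintype.card V) {u w : V}
    (huw : u ≠ w) (hadj : ¬ G.Adj u w) (hL : IsKAssignment L (Fintype.card V - 1))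
    (hP : #(palette L) < Fintype.card V) :
    ∃ f, IsProportionalColoring G L (Fintype.card V - 1) f := by
  classical
  have hLP : ∀ v, L v = palette L := fun v =>
    eq_of_subset_of_card_le (subset_palette L v) (by rw [hL v]; omega)
  have hmult : ∀ c ∈ palette L, mult L c = Fintype.card V := fun c hc => by
    rw [mult, filter_true_of_mem fun v _ => (hLP v).symm ▸ hc, card_univ]
  have hcard : Fintype.card {x // x ≠ w} = Fintype.card (palette L) := by
    rw [Fintype.card_subtype_compl, Fintype.card_subtype_eq, Fintype.card_coe, ← hLP w, hL w]
  let e := Fintype.equivOfCardEq hcard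
  let r : V → {x // x ≠ w} := fun x => if hx : x = w then ⟨u, huw⟩ else ⟨x, hx⟩
  have hr : ∀ x y, r x = r y → x = y ∨ (x = w ∧ y = u) ∨ (x = u ∧ y = w) := by
    intro x y hxy
    by_cases hx : x = w <;> by_cases hy : y = w <;>
      simp only [r, hx, hy, dite_true, dite_false, Subtype.mk.injEq] at hxy <;>
      subst_vars <;> tauto
  refine ⟨fun x => e (r x), (isProportionalColoring_iff (by omega)).2
    ⟨⟨fun x => by rw [hLP x]; exact (e (r x)).2, fun x y hxy hxy' => ?_⟩, fun c hc => ?_⟩⟩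
  · rcases hr x y (e.injective (Subtype.ext hxy')) with rfl | ⟨rfl, rfl⟩ | ⟨rfl, rfl⟩
    · exact hxy.ne rfl
    · exact hadj hxy.symm
    · exact hadj hxy
  · set y := e.symm ⟨c, hc⟩
    have hfiber : ∀ x, (e (r x) : ℕ) = c ↔ r x = y := fun x => by
      rw [Equiv.eq_symm_apply, Subtype.ext_iff]
    have hry : r y = y := by simp [r, y.2]
    have hpos : 1 ≤ #{x | (e (r x) : ℕ) = c} :=
      card_pos.2 ⟨y, mem_filter.2 ⟨mem_univ _, (hfiber y).2 hry⟩⟩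
    have hle : #{x | (e (r x) : ℕ) = c} ≤ 2 := by
      refine (card_le_card fun x hx => ?_).trans (card_le_two (a := (y : V)) (b := w))
      have hx := (hfiber x).1 (mem_filter.1 hx).2
      rcases hr x y (hx.trans hry.symm) with h | ⟨h, -⟩ | ⟨-, h⟩
      exacts [by simp [h], by simp [h], absurd h y.2]
    rw [hmult c hc]
    interval_cases #{x | (e (r x) : ℕ) = c} <;> omega

theorem exists_isProportionalColoring_of_card_le_card_palette (hV : 3 ≤ Fintype.card V)
    (hL : IsKAssignment L (Fintype.card V - 1)) (hP : Fintype.card V ≤ #(palette L)) :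
    ∃ f, IsProportionalColoring G L (Fintype.card V - 1) f := by
  obtain ⟨f, hinj, hmem, hcover⟩ := exists_injective_surjOn_heavyColors hL hP
  refine ⟨f, (isProportionalColoring_iff (by omega)).2
    ⟨⟨hmem, fun x y hxy => hinj.ne hxy.ne⟩, fun c hc => ?_⟩⟩
  have hle : #{x | f x = c} ≤ 1 := card_le_one.2 fun x hx y hy =>
    hinj ((mem_filter.1 hx).2.trans (mem_filter.1 hy).2.symm)
  have hpos := mult_pos_iff_mem_palette.2 hc
  have hmult := mult_le_card (L := L) (c := c)
  by_cases hheavy : Fintype.card V - 1 ≤ mult L c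
  · obtain ⟨v, rfl⟩ := hcover c (mem_filter.2 ⟨hc, hheavy⟩)
    have : 1 ≤ #{x | f x = f v} := card_pos.2 ⟨v, mem_filter.2 ⟨mem_univ _, rfl⟩⟩
    rw [show #{x | f x = f v} = 1 by omega]
    omega
  · interval_cases #{x | f x = c} <;> omega

theorem proportionallyChoosable_card_sub_one (hV : 3 ≤ Fintype.card V) {u w : V} (huw : u ≠ w)
    (hadj : ¬ G.Adj u w) : ProportionallyChoosable G (Fintype.card V - 1) := fun L hL =>
  (lt_or_ge #(palette L) (Fintype.card V)).elim
    (exists_isProportionalColoring_of_card_palette_lt hV huw hadj hL)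
    (exists_isProportionalColoring_of_card_le_card_palette hV hL)

end UpperBound

section CompleteBipartite

variable {n m k c : ℕ} {L : Fin n ⊕ Fin m → Finset ℕ} {f : Fin n ⊕ Fin m → ℕ}

theorem mult_sum_elim (LA : Fin n → Finset ℕ) (LB : Fin m → Finset ℕ) (c : ℕ) :
    mult (Sum.elim LA LB) c = #{a | c ∈ LA a} + #{b | c ∈ LB b} :=
  card_filter_univ_sum _

theorem card_fiber_eq_add (f : Fin n ⊕ Fin m → ℕ) (c : ℕ) :
    #{v | f v = c} = #{a | f (Sum.inl a) = c} + #{b | f (Sum.inr b) = c} :=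
  card_filter_univ_sum _

theorem IsProperListColoring.card_inl_eq_zero_or_card_inr_eq_zero
    (hf : IsProperListColoring (KBip n m) L f) :
    #{a | f (Sum.inl a) = c} = 0 ∨ #{b | f (Sum.inr b) = c} = 0 := by
  by_contra! h
  obtain ⟨a, ha⟩ := card_pos.1 (Nat.pos_of_ne_zero h.1)
  obtain ⟨b, hb⟩ := card_pos.1 (Nat.pos_of_ne_zero h.2)
  exact hf.2 (by simp : (KBip n m).Adj (Sum.inl a) (Sum.inr b))
    ((mem_filter.1 ha).2.trans (mem_filter.1 hb).2.symm)

/-- A color of multiplicity `2k` is used twice, hence on one side only. -/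
theorem IsProportionalColoring.even_card_inl (hf : IsProportionalColoring (KBip n m) L k f)
    (hk : 0 < k) (hmult : mult L c = 2 * k) : Even #{a | f (Sum.inl a) = c} := by
  have h2 := hf.card_fiber_eq_of_mult_eq_mul hk two_pos hmult
  rw [card_fiber_eq_add] at h2
  rcases hf.1.card_inl_eq_zero_or_card_inr_eq_zero (c := c) with h | h
  · exact ⟨0, by omega⟩
  · exact ⟨1, by omega⟩

theorem card_eq_sum_card_inl {T : Finset ℕ} (hf : IsProperListColoring (KBip n m) L f)
    (hT : ∀ a, L (Sum.inl a) ⊆ T) : n = ∑ c ∈ T, #{a | f (Sum.inl a) = c} := by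
  simpa using card_eq_sum_card_fiberwise (s := univ) (t := T)
    fun a _ => hT a (hf.1 (Sum.inl a))

theorem not_proportionallyChoosable_kbip_of_two_mul_le (hn : 0 < n) (hk : 2 * k ≤ m + 1) :
    ¬ ProportionallyChoosable (KBip n m) k :=
  not_proportionallyChoosable_of_forall_adj (Sum.inl ⟨0, hn⟩) (univ.map .inr)
    (by simp) (by simpa using hk)

def prefixRangeLists (k s : ℕ) (b : Fin m) : Finset ℕ :=
  if (b : ℕ) < s then range k else Ico k (2 * k)

theorem card_prefixRangeLists (k s : ℕ) (b : Fin m) : #(prefixRangeLists k s b) = k := by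
  unfold prefixRangeLists
  split_ifs <;> simp
  omega

theorem card_filter_mem_prefixRangeLists {s : ℕ} (hc : c < k) (hs : s ≤ m) :
    #{b : Fin m | c ∈ prefixRangeLists k s b} = s := by
  have : ∀ b : Fin m, c ∈ prefixRangeLists k s b ↔ (b : ℕ) < s := fun b => by
    unfold prefixRangeLists
    split_ifs <;> simp [*]
  simp only [this, Fin.card_filter_val_lt]
  omega

theorem two_mul_notMem_prefixRangeLists (k s : ℕ) (b : Fin m) :
    2 * k ∉ prefixRangeLists k s b := by
  unfold prefixRangeLists
  split_ifs <;> simp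
  omega

/-- Colors `< k` all have multiplicity `2k` and cover the odd side `A`. -/
theorem not_proportionallyChoosable_kbip_of_odd (hk : 0 < k) (hodd : Odd n) (hn : n ≤ 2 * k)
    (hnm : 2 * k ≤ n + m) : ¬ ProportionallyChoosable (KBip n m) k := by
  intro h
  set L : Fin n ⊕ Fin m → Finset ℕ :=
    Sum.elim (fun _ => range k) (prefixRangeLists k (2 * k - n))
  obtain ⟨f, hf⟩ := h L (by rintro (a | b) <;> simp [L, card_prefixRangeLists])
  have hmult : ∀ c ∈ range k, mult L c = 2 * k := fun c hc => by
    rw [mult_sum_elim, card_filter_mem_prefixRangeLists (mem_range.1 hc) (by omega)]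
    simp [hc]
    omega
  have hsum := card_eq_sum_card_inl hf.1 (T := range k) fun a => subset_refl _
  exact Nat.not_even_iff_odd.2 hodd
    (hsum ▸ even_sum _ fun c hc => hf.even_card_inl hk (hmult c hc))

/-- Colors `< k` have multiplicity `2k`; the extra color `2k` has multiplicity `k` and lies on
side `A` only, so it is used exactly once there, making `n` odd. -/
theorem not_proportionallyChoosable_kbip_of_even (hk : 0 < k) (heven : Even n) (hkn : k ≤ n)
    (hn : n ≤ 2 * k) (hnm : 2 * k < n + m) : ¬ ProportionallyChoosable (KBip n m) k := by
  intro h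
  set LA : Fin n → Finset ℕ := fun i =>
    if (i : ℕ) < k then insert (2 * k) ((range k).erase i) else range k
  set L := Sum.elim LA (prefixRangeLists k (2 * k + 1 - n))
  have hLA : ∀ i, LA i ⊆ insert (2 * k) (range k) := fun i => by
    simp only [LA]
    split_ifs
    exacts [insert_subset_insert _ (erase_subset _ _), subset_insert _ _]
  obtain ⟨f, hf⟩ := h L <| by
    rintro (i | b)
    · simp only [L, Sum.elim_inl, LA]
      split_ifs with hi
      · rw [card_insert_of_notMem (by simp; omega), card_erase_of_mem (by simpa using hi),
          card_range]
        omega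
      · exact card_range k
    · exact card_prefixRangeLists k _ b
  have hmult : ∀ c ∈ range k, mult L c = 2 * k := fun c hc => by
    have hc' := mem_range.1 hc
    have hA : ({i | c ∈ LA i} : Finset (Fin n)) = univ.erase ⟨c, by omega⟩ := by
      ext i
      simp only [LA, mem_filter, mem_univ, true_and, mem_erase, ne_eq, Fin.ext_iff]
      split_ifs <;> simp [hc'] <;> omega
    rw [mult_sum_elim, card_filter_mem_prefixRangeLists hc' (by omega), hA,
      card_erase_of_mem (mem_univ _), card_univ, Fintype.card_fin]
    omega
  have hmult' : mult L (2 * k) = 1 * k := by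
    have hA : ∀ i : Fin n, 2 * k ∈ LA i ↔ (i : ℕ) < k := fun i => by
      simp only [LA]
      split_ifs <;> simp [*]
    rw [mult_sum_elim, filter_congr fun i _ => hA i, Fin.card_filter_val_lt,
      filter_false_of_mem fun b _ => two_mul_notMem_prefixRangeLists k _ b]
    simp [hkn]
  have hone : #{a | f (Sum.inl a) = 2 * k} = 1 := by
    have hclass := hf.card_fiber_eq_of_mult_eq_mul hk one_pos hmult'
    have hB : #{b | f (Sum.inr b) = 2 * k} = 0 := card_eq_zero.2 <| filter_eq_empty_iff.2
      fun b _ hb => two_mul_notMem_prefixRangeLists k _ b (hb ▸ hf.1.1 (Sum.inr b))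
    rw [card_fiber_eq_add] at hclass
    omega
  have hsum := card_eq_sum_card_inl hf.1 hLA
  rw [sum_insert (by simp; omega), hone] at hsum
  obtain ⟨a, ha⟩ := even_sum _ fun c hc => hf.even_card_inl hk (hmult c hc)
  obtain ⟨b, hb⟩ := heven
  omega

/-- Each side has `k` vertices and `k - 1` private colors of multiplicity `k`, used once each,
so both sides must use the shared color `0`. -/
theorem not_proportionallyChoosable_kbip_self (hk : 0 < k) :
    ¬ ProportionallyChoosable (KBip k k) k := by
  intro h
  set L := Sum.elim (fun _ : Fin k => insert 0 (Ico 1 k))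
    (fun _ : Fin k => insert 0 (Ico (k + 1) (2 * k)))
  obtain ⟨f, hf⟩ := h L <| by
    rintro (a | b) <;> simp [L, card_insert_of_notMem] <;> omega
  have hclass : ∀ c, mult L c = 1 * k → #{v | f v = c} = 1 := fun c =>
    hf.card_fiber_eq_of_mult_eq_mul hk one_pos
  obtain ⟨a, ha⟩ : ∃ a, f (Sum.inl a) = 0 := by
    refine exists_eq_of_forall_mem_insert (X := Ico 1 k) (fun a => hf.1.1 (Sum.inl a))
      (fun c hc => ?_) (by simp; omega)
    have hA : c ∈ insert 0 (Ico 1 k) := mem_insert_of_mem hc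
    have hB : c ∉ insert 0 (Ico (k + 1) (2 * k)) := by simp at hc ⊢; omega
    have := hclass c (by simp [L, mult_sum_elim, hA, hB])
    rw [card_fiber_eq_add] at this
    omega
  obtain ⟨b, hb⟩ : ∃ b, f (Sum.inr b) = 0 := by
    refine exists_eq_of_forall_mem_insert (X := Ico (k + 1) (2 * k))
      (fun b => hf.1.1 (Sum.inr b)) (fun c hc => ?_) (by simp; omega)
    have hA : c ∉ insert 0 (Ico 1 k) := by simp at hc ⊢; omega
    have hB : c ∈ insert 0 (Ico (k + 1) (2 * k)) := mem_insert_of_mem hc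
    have := hclass c (by simp [L, mult_sum_elim, hA, hB])
    rw [card_fiber_eq_add] at this
    omega
  exact hf.1.2 (by simp : (KBip k k).Adj (Sum.inl a) (Sum.inr b)) (ha.trans hb.symm)

theorem not_proportionallyChoosable_kbip_of_le (hn : 0 < n) (hnm : n ≤ m) (hk : k ≤ n) :
    ¬ ProportionallyChoosable (KBip n m) k := by
  by_cases hstar : 2 * k ≤ m + 1
  · exact not_proportionallyChoosable_kbip_of_two_mul_le hn hstar
  rcases Nat.even_or_odd n with heven | hodd
  · obtain hlt | ⟨rfl, rfl⟩ : 2 * k < n + m ∨ n = k ∧ m = k := by omega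
    · exact not_proportionallyChoosable_kbip_of_even (by omega) heven hk (by omega) hlt
    · exact not_proportionallyChoosable_kbip_self hn
  · exact not_proportionallyChoosable_kbip_of_odd (by omega) hodd (by omega) (by omega)

end CompleteBipartite

/-- For `2 ≤ n ≤ m`,
`max {n+1, 1 + ⌈m/2⌉} ≤ χ_pc(K_{n,m}) ≤ n + m - 1`. -/
theorem stmt14 (n m : ℕ) (hn : 2 ≤ n) (hnm : n ≤ m) :
    max (n + 1) (1 + (m + 1) / 2) ≤ propChoiceNumber (KBip n m) ∧
      propChoiceNumber (KBip n m) ≤ n + m - 1 := by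
  have hup : ProportionallyChoosable (KBip n m) (n + m - 1) := by
    simpa using proportionallyChoosable_card_sub_one (G := KBip n m) (by simp; omega)
      (u := .inl ⟨0, by omega⟩) (w := .inl ⟨1, by omega⟩) (by simp) (by simp)
  have hlow : ∀ k, ProportionallyChoosable (KBip n m) k → max (n + 1) (1 + (m + 1) / 2) ≤ k :=
    fun k hk => max_le
      (by by_contra! h
          exact not_proportionallyChoosable_kbip_of_le (by omega) hnm (by omega) hk)
      (by by_contra! h
          exact not_proportionallyChoosable_kbip_of_two_mul_le (by omega) (by omega) hk)
  exact ⟨le_csInf ⟨_, hup⟩ hlow, Nat.sInf_le hup⟩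
end
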